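/- arXiv:2205.15860 — 2 statements merged into one kernel-verified Lean document; each statement's English description precedes it below -/
import Mathlib

section
/- Deterministic bias-transfer bound (core of Proposition 2): assume the debiased training labels satisfy ε-demographic parity on the sample, i.e. max_k ( max_s Ê[h_{·,k} | s] − min_s Ê[h_{·,k} | s] ) ≤ ε. Define τ = max_{k,s} | Ê[f_k(x_·) | s] − Ê[h_{·,k} | s] | and γ = max_{k,s} | E[f_k | g = s] − Ê[f_k(x_·) | s] |. Then the population multiclass demographic parity of f satisfies DP(f) := max_k ( max_s E[f_k | g = s] − min_s E[f_k | g = s] ) ≤ ε + 2τ + 2γ. -/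
open Finset MeasureTheory

/-- Empirical mean of the `k`-th label coordinate over the sample points in group `s`. -/
noncomputable def empCondMean {n R L : ℕ} {X : Type*} (g : X → Fin R) (x : Fin n → X)
    (u : Fin n → Fin L → ℝ) (k : Fin L) (s : Fin R) : ℝ :=
  (∑ i ∈ univ.filter (fun i => g (x i) = s), u i k) /
    ((univ.filter (fun i => g (x i) = s)).card : ℝ)

/-- Population conditional mean `E[f_k | g = s]` under the probability measure `P`. -/
noncomputable def popCondMean {R L : ℕ} {X : Type*} [MeasurableSpace X] (P : Measure X)
    (g : X → Fin R) (f : X → Fin L → ℝ) (k : Fin L) (s : Fin R) : ℝ :=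
  ∫ a, f a k ∂(ProbabilityTheory.cond P {a | g a = s})

/-- Deterministic bias-transfer bound: if the debiased training labels `h` satisfy
`ε`-demographic parity on the sample, `τ` is the largest gap between the sample group means of
the classifier `f` and of `h`, and `γ` is the largest gap between the population and sample
group means of `f`, then the population multiclass demographic parity of `f` is at most
`ε + 2τ + 2γ`. -/
theorem bias_transfer_bound
    (X : Type*) [MeasurableSpace X] (P : Measure X) [IsProbabilityMeasure P]
    (n R L : ℕ) [NeZero n] [NeZero R] [NeZero L]
    (g : X → Fin R) (hgm : Measurable g)
    (hpos : ∀ s : Fin R, 0 < P {a | g a = s})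
    (f : X → Fin L → ℝ) (hfm : ∀ k, Measurable fun a => f a k)
    (hfsimplex : ∀ a, (∀ k, 0 ≤ f a k) ∧ ∑ k, f a k = 1)
    (x : Fin n → X) (hx : ∀ s : Fin R, ∃ i : Fin n, g (x i) = s)
    (h : Fin n → Fin L → ℝ)
    (hhsimplex : ∀ i, (∀ k, 0 ≤ h i k) ∧ ∑ k, h i k = 1)
    (ε τ γ : ℝ)
    (hε : univ.sup' univ_nonempty (fun k : Fin L =>
        univ.sup' univ_nonempty (fun s : Fin R => empCondMean g x h k s) -
          univ.inf' univ_nonempty (fun s : Fin R => empCondMean g x h k s)) ≤ ε)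
    (hτ : τ = univ.sup' univ_nonempty (fun p : Fin L × Fin R =>
        |empCondMean g x (fun i => f (x i)) p.1 p.2 - empCondMean g x h p.1 p.2|))
    (hγ : γ = univ.sup' univ_nonempty (fun p : Fin L × Fin R =>
        |popCondMean P g f p.1 p.2 - empCondMean g x (fun i => f (x i)) p.1 p.2|)) :
    univ.sup' univ_nonempty (fun k : Fin L =>
        univ.sup' univ_nonempty (fun s : Fin R => popCondMean P g f k s) -
          univ.inf' univ_nonempty (fun s : Fin R => popCondMean P g f k s)) ≤
      ε + 2 * τ + 2 * γ := by
  have hτ' : ∀ k s, |empCondMean g x (fun i => f (x i)) k s - empCondMean g x h k s| ≤ τ := by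
    intro k s; rw [hτ]
    exact le_sup' (fun p : Fin L × Fin R =>
      |empCondMean g x (fun i => f (x i)) p.1 p.2 - empCondMean g x h p.1 p.2|) (mem_univ (k, s))
  have hγ' : ∀ k s, |popCondMean P g f k s - empCondMean g x (fun i => f (x i)) k s| ≤ γ := by
    intro k s; rw [hγ]
    exact le_sup' (fun p : Fin L × Fin R =>
      |popCondMean P g f p.1 p.2 - empCondMean g x (fun i => f (x i)) p.1 p.2|) (mem_univ (k, s))
  have hε' : ∀ k (s s' : Fin R), empCondMean g x h k s - empCondMean g x h k s' ≤ ε := by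
    intro k s s'
    have h1 : empCondMean g x h k s ≤
        univ.sup' univ_nonempty (fun s => empCondMean g x h k s) :=
      le_sup' _ (mem_univ s)
    have h2 : univ.inf' univ_nonempty (fun s => empCondMean g x h k s) ≤
        empCondMean g x h k s' :=
      inf'_le _ (mem_univ s')
    have h3 := le_sup' (fun k : Fin L =>
        univ.sup' univ_nonempty (fun s : Fin R => empCondMean g x h k s) -
          univ.inf' univ_nonempty (fun s : Fin R => empCondMean g x h k s)) (mem_univ k)
    linarith [h3.trans hε]
  apply sup'_le; intro k _
  rw [sub_le_iff_le_add]
  apply sup'_le; intro s _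
  rw [add_comm, ← sub_le_iff_le_add]
  apply le_inf'; intro s' _
  have a1 := abs_le.mp (hγ' k s)
  have a2 := abs_le.mp (hγ' k s')
  have b1 := abs_le.mp (hτ' k s)
  have b2 := abs_le.mp (hτ' k s')
  have c := hε' k s s'
  linarith [a1.2, a2.1, b1.2, b2.1, c]
end

section
/- The multi-label debias-then-normalize counterexample: let the group assignment be g = (0, 1, 0) on three examples and three classes, and define Y = [[1/2, 1/2, 0], [1, 0, 0], [0, 0, 1]], Ŷ = [[1, 1/2, 0], [1/2, 1/4, 1/2], [0, 0, 1]], and Ỹ = [[2/3, 1/3, 0], [2/5, 1/5, 2/5], [0, 0, 1]]. Then: (a) Ỹ is the row-normalization of Ŷ (each row of Ỹ equals the corresponding row of Ŷ divided by its sum); (b) DP̂(Y) = 3/4, so Y is biased; (c) for every class k, the two group means of the k-th column of Ŷ are equal, so DP̂(Ŷ) = 0; and (d) DP̂(Ỹ) = 1/10 > 0, so normalizing the independently debiased scores reintroduces bias. -/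
open Finset

/-- The empirical mean of `v` over the examples `i` with group `g i = s`. -/
noncomputable def groupMean {N R : ℕ} (g : Fin N → Fin R) (s : Fin R) (v : Fin N → ℝ) : ℝ :=
  (∑ i ∈ univ.filter (fun i => g i = s), v i) /
    ((univ.filter (fun i => g i = s)).card : ℝ)

/-- Empirical multiclass demographic parity of the score matrix `Y`. -/
noncomputable def empDP {N L R : ℕ} [NeZero L] [NeZero R] (g : Fin N → Fin R)
    (Y : Fin N → Fin L → ℝ) : ℝ :=
  univ.sup' univ_nonempty (fun k : Fin L =>
    univ.sup' univ_nonempty (fun s : Fin R => groupMean g s (fun i => Y i k)) -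
    univ.inf' univ_nonempty (fun s : Fin R => groupMean g s (fun i => Y i k)))

section LatticeOverFin

variable {α : Type*}

lemma Finset.sup'_univ_fin_two [SemilatticeSup α] (f : Fin 2 → α) :
    univ.sup' univ_nonempty f = f 0 ⊔ f 1 := by
  simp [Fin.univ_succ]

lemma Finset.inf'_univ_fin_two [SemilatticeInf α] (f : Fin 2 → α) :
    univ.inf' univ_nonempty f = f 0 ⊓ f 1 := by
  simp [Fin.univ_succ]

lemma Finset.sup'_univ_fin_three [SemilatticeSup α] (f : Fin 3 → α) :
    univ.sup' univ_nonempty f = f 0 ⊔ (f 1 ⊔ f 2) := by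
  simp [Fin.univ_succ]

end LatticeOverFin

lemma empDP_of_two_groups {N L : ℕ} [NeZero L] (g : Fin N → Fin 2)
    (Y : Fin N → Fin L → ℝ) :
    empDP g Y = univ.sup' univ_nonempty
      (fun k => |groupMean g 0 (fun i => Y i k) - groupMean g 1 (fun i => Y i k)|) := by
  simp only [empDP, sup'_univ_fin_two, inf'_univ_fin_two, max_sub_min_eq_abs']

lemma groupMean_zero_one_zero_of_zero (v : Fin 3 → ℝ) :
    groupMean (![0, 1, 0] : Fin 3 → Fin 2) 0 v = (v 0 + v 2) / 2 := by
  simp [groupMean,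
    show univ.filter (fun i => (![0, 1, 0] : Fin 3 → Fin 2) i = 0) = {0, 2} by decide]

lemma groupMean_zero_one_zero_of_one (v : Fin 3 → ℝ) :
    groupMean (![0, 1, 0] : Fin 3 → Fin 2) 1 v = v 1 := by
  simp [groupMean,
    show univ.filter (fun i => (![0, 1, 0] : Fin 3 → Fin 2) i = 1) = {1} by decide]

lemma empDP_zero_one_zero (Y : Fin 3 → Fin 3 → ℝ) :
    empDP (![0, 1, 0] : Fin 3 → Fin 2) Y =
      max |(Y 0 0 + Y 2 0) / 2 - Y 1 0|
        (max |(Y 0 1 + Y 2 1) / 2 - Y 1 1| |(Y 0 2 + Y 2 2) / 2 - Y 1 2|) := by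
  simp only [empDP_of_two_groups, sup'_univ_fin_three, groupMean_zero_one_zero_of_zero,
    groupMean_zero_one_zero_of_one]

/-- The multi-label debias-then-normalize counterexample: with groups `g = (0,1,0)`,
`Ỹ` is the row-normalization of `Ŷ`; the original labels `Y` have `DP̂(Y) = 3/4`; the
independently debiased scores `Ŷ` have equal group means in every class (so `DP̂(Ŷ) = 0`);
yet after normalization `DP̂(Ỹ) = 1/10 > 0`. -/
theorem multilabel_normalization_counterexample
    (g : Fin 3 → Fin 2) (hgdef : g = ![0, 1, 0])
    (Y Yhat Ytilde : Fin 3 → Fin 3 → ℝ)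
    (hY : Y = ![![1/2, 1/2, 0], ![1, 0, 0], ![0, 0, 1]])
    (hYhat : Yhat = ![![1, 1/2, 0], ![1/2, 1/4, 1/2], ![0, 0, 1]])
    (hYtilde : Ytilde = ![![2/3, 1/3, 0], ![2/5, 1/5, 2/5], ![0, 0, 1]]) :
    (∀ i k, Ytilde i k = Yhat i k / (∑ j, Yhat i j)) ∧
    empDP g Y = 3 / 4 ∧
    ((∀ k : Fin 3,
        groupMean g 0 (fun i => Yhat i k) = groupMean g 1 (fun i => Yhat i k)) ∧
      empDP g Yhat = 0) ∧
    (empDP g Ytilde = 1 / 10 ∧ 0 < empDP g Ytilde) := by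
  have hnormalized : ∀ i k, Ytilde i k = Yhat i k / (∑ j, Yhat i j) := by
    subst hYhat hYtilde
    intro i k
    fin_cases i <;> fin_cases k <;>
      norm_num [Fin.sum_univ_three, Matrix.cons_val_two, Matrix.tail_cons, Matrix.head_cons]
  have hDP : empDP g Y = 3 / 4 := by
    rw [hgdef, hY, empDP_zero_one_zero]
    norm_num [Matrix.cons_val_two, Matrix.tail_cons, Matrix.head_cons]
  have hbalanced : ∀ k : Fin 3,
      groupMean g 0 (fun i => Yhat i k) = groupMean g 1 (fun i => Yhat i k) := by
    subst hgdef hYhat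
    intro k
    fin_cases k <;> norm_num [groupMean_zero_one_zero_of_zero, groupMean_zero_one_zero_of_one,
      Matrix.cons_val_two, Matrix.tail_cons, Matrix.head_cons]
  -- The rows of `Yhat` sum to 3/2 and 1 in group 0 but to 5/4 in group 1, so normalizing
  -- rescales the two groups differently and the balanced class means come apart.
  have hDPtilde : empDP g Ytilde = 1 / 10 := by
    rw [hgdef, hYtilde, empDP_zero_one_zero]
    norm_num [Matrix.cons_val_two, Matrix.tail_cons, Matrix.head_cons]
  exact ⟨hnormalized, hDP, ⟨hbalanced, by simp [empDP_of_two_groups, hbalanced]⟩, hDPtilde,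
    hDPtilde ▸ by norm_num⟩
end
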